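/- Let G be a finite abelian p-group and e ≥ 1. Then the group of normalized units decomposes as V(Z_{p^e}G) = G × L for some subgroup L of V(Z_{p^e}G); i.e., G is a direct factor of V(Z_{p^e}G). -/

import Mathlib

/-!
Reduction modulo `p` and the Frobenius `x ↦ x ^ p ^ k` on `𝔽_p G`, which sends `∑ a_g g` to
`∑ a_g g ^ p ^ k`, give the two facts about `V = V(ℤ/p^e G)` that matter: `V` is a finite
`p`-group (if `|G| = p ^ n` then `u ^ p ^ n ≡ 1 mod p`, and `(1 + p z) ^ p ^ (e - 1) = 1`), and
`G` is pure in `V` (if `u ^ p ^ k = g` then reducing mod `p` shows `g` is a `p ^ k`-th power in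
`G`). A pure subgroup `H` of a finite abelian `p`-group `A` is a direct factor: writing `A ⧸ H` as
a product of cyclic groups, purity lifts each generator to an element of `A` of the same order,
which defines a section of `A → A ⧸ H` whose range is a complement of `H`.
-/

/-- The augmentation map of a group ring. -/
noncomputable def aug (R G : Type*) [CommRing R] [CommGroup G] :
    MonoidAlgebra R G →ₐ[R] R := MonoidAlgebra.lift R R G 1

/-- The group of normalized units of a group ring. -/
noncomputable def Vgrp (R G : Type*) [CommRing R] [CommGroup G] :
    Subgroup (MonoidAlgebra R G)ˣ :=
  MonoidHom.ker (Units.map ((aug R G).toRingHom : MonoidAlgebra R G →* R))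

/-- The canonical embedding of `G` into the unit group of its group ring. -/
noncomputable def iota (R G : Type*) [CommRing R] [CommGroup G] :
    G →* (MonoidAlgebra R G)ˣ :=
  (Units.map (MonoidAlgebra.of R G)).comp (toUnits : G ≃* Gˣ).toMonoidHom

open MonoidAlgebra

section PureSubgroup

variable {A : Type*} [CommGroup A]

def Subgroup.IsPPure (p : ℕ) (H : Subgroup A) : Prop :=
  ∀ (k : ℕ) (a : A), a ^ p ^ k ∈ H → ∃ h ∈ H, h ^ p ^ k = a ^ p ^ k

lemma Subgroup.IsPPure.exists_lift_pow_orderOf_eq_one {p : ℕ} [Fact p.Prime] {H : Subgroup A}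
    (hH : H.IsPPure p) (hA : IsPGroup p A) (q : A ⧸ H) :
    ∃ a : A, (a : A ⧸ H) = q ∧ a ^ orderOf q = 1 := by
  obtain ⟨a, rfl⟩ := QuotientGroup.mk_surjective q
  obtain ⟨k, hk⟩ := IsPGroup.iff_orderOf.mp (hA.to_quotient H) a
  have hmem : a ^ p ^ k ∈ H := by
    rw [← QuotientGroup.eq_one_iff, QuotientGroup.mk_pow, ← hk, pow_orderOf_eq_one]
  obtain ⟨h, hH, hh⟩ := hH k a hmem
  refine ⟨a * h⁻¹, ?_, ?_⟩
  · simpa using (QuotientGroup.eq_one_iff h).mpr hH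
  · rw [hk, mul_pow, inv_pow, hh, mul_inv_cancel]

lemma Multiplicative.mem_zpowers_ofAdd_one {n : ℕ} (x : Multiplicative (ZMod n)) :
    x ∈ Subgroup.zpowers (Multiplicative.ofAdd 1) := by
  obtain ⟨k, hk⟩ := ZMod.intCast_surjective x.toAdd
  exact ⟨k, by simp only [← ofAdd_zsmul, zsmul_one, hk, ofAdd_toAdd]⟩

lemma MonoidHom.ext_multiplicative_zmod {n : ℕ} {M : Type*} [Group M]
    {f g : Multiplicative (ZMod n) →* M} (h : f (.ofAdd 1) = g (.ofAdd 1)) : f = g := by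
  refine MonoidHom.ext fun x => ?_
  obtain ⟨k, rfl⟩ := Subgroup.mem_zpowers_iff.mp (Multiplicative.mem_zpowers_ofAdd_one x)
  rw [map_zpow, map_zpow, h]

lemma exists_splitting_of_exists_lift [Finite A] {H : Subgroup A}
    (hlift : ∀ q : A ⧸ H, ∃ a : A, (a : A ⧸ H) = q ∧ a ^ orderOf q = 1) :
    ∃ s : A ⧸ H →* A, ∀ q, (s q : A ⧸ H) = q := by
  classical
  obtain ⟨ι, _, n, -, ⟨e⟩⟩ := CommGroup.equiv_prod_multiplicative_zmod_of_finite (A ⧸ H)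
  have hord (i : ι) : orderOf (e.symm (Pi.mulSingle i (.ofAdd 1))) =
      orderOf (Multiplicative.ofAdd (1 : ZMod (n i))) := by
    rw [MulEquiv.orderOf_eq, orderOf_piMulSingle]
  choose a ha using fun i => hlift (e.symm (Pi.mulSingle i (.ofAdd 1)))
  let φ (i : ι) : Multiplicative (ZMod (n i)) →* A :=
    monoidHomOfForallMemZpowers Multiplicative.mem_zpowers_ofAdd_one
      (orderOf_dvd_of_pow_eq_one (hord i ▸ (ha i).2))
  have hcomm : Pairwise fun i j => ∀ x y, Commute (φ i x) (φ j y) :=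
    fun _ _ _ _ _ => Commute.all _ _
  refine ⟨(MonoidHom.noncommPiCoprod φ hcomm).comp e.toMonoidHom, ?_⟩
  suffices (QuotientGroup.mk' H).comp (MonoidHom.noncommPiCoprod φ hcomm) = e.symm.toMonoidHom by
    intro q; simpa using congr($this (e q))
  refine MonoidHom.pi_ext fun i x => ?_
  have : ((QuotientGroup.mk' H).comp (MonoidHom.noncommPiCoprod φ hcomm)).comp
      (MonoidHom.mulSingle _ i) = e.symm.toMonoidHom.comp (MonoidHom.mulSingle _ i) :=
    MonoidHom.ext_multiplicative_zmod (by
      rw [MonoidHom.comp_apply, MonoidHom.comp_apply, MonoidHom.mulSingle_apply,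
        MonoidHom.noncommPiCoprod_mulSingle, monoidHomOfForallMemZpowers_apply_gen]
      exact (ha i).1)
  exact congr($this x)

lemma exists_complement_of_splitting {H : Subgroup A} (s : A ⧸ H →* A)
    (hs : ∀ q, (s q : A ⧸ H) = q) :
    ∃ L : Subgroup A, H ⊓ L = ⊥ ∧ ∀ a : A, ∃ h ∈ H, ∃ l ∈ L, a = h * l := by
  refine ⟨s.range, eq_bot_iff.mpr ?_, fun a => ⟨a * (s a)⁻¹, ?_, s a, ⟨a, rfl⟩, by group⟩⟩
  · rintro _ ⟨hH, q, rfl⟩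
    obtain rfl : q = 1 := by rw [← hs q, QuotientGroup.eq_one_iff]; exact hH
    exact map_one s
  · rw [← QuotientGroup.eq_one_iff, QuotientGroup.mk_mul, QuotientGroup.mk_inv, hs,
      mul_inv_cancel]

theorem Subgroup.IsPPure.exists_complement [Finite A] {p : ℕ} [Fact p.Prime] {H : Subgroup A}
    (hH : H.IsPPure p) (hA : IsPGroup p A) :
    ∃ L : Subgroup A, H ⊓ L = ⊥ ∧ ∀ a : A, ∃ h ∈ H, ∃ l ∈ L, a = h * l := by
  obtain ⟨s, hs⟩ := exists_splitting_of_exists_lift (hH.exists_lift_pow_orderOf_eq_one hA)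
  exact exists_complement_of_splitting s hs

end PureSubgroup

lemma powMonoidHom_natCard_eq_one {G : Type*} [CommGroup G] [Finite G] :
    powMonoidHom (Nat.card G) = (1 : G →* G) :=
  MonoidHom.ext fun _ => pow_card_eq_one'

lemma ZMod.dvd_of_castHom_eq_zero {m n : ℕ} (hmn : m ∣ n) {r : ZMod n}
    (hr : ZMod.castHom hmn (ZMod m) r = 0) : (m : ZMod n) ∣ r := by
  obtain ⟨z, rfl⟩ := ZMod.intCast_surjective r
  rw [map_intCast, ZMod.intCast_zmod_eq_zero_iff_dvd] at hr
  obtain ⟨k, rfl⟩ := hr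
  exact ⟨k, by push_cast; ring⟩

namespace MonoidAlgebra

instance finite {R M : Type*} [Semiring R] [Finite R] [Finite M] : Finite (MonoidAlgebra R M) :=
  Finite.of_equiv _ (coeffEquiv.trans Finsupp.equivFunOnFinite).symm

lemma dvd_of_mapRingHom_eq_zero {R S M : Type*} [CommRing R] [CommRing S] [CommMonoid M]
    {f : R →+* S} {a : R} (ha : ∀ r, f r = 0 → a ∣ r) {x : MonoidAlgebra R M}
    (hx : mapRingHom M f x = 0) : single 1 a ∣ x := by
  rw [← sum_coeff_single x]
  refine Finset.dvd_sum fun m _ => ?_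
  obtain ⟨b, hb⟩ := ha _ (by simpa using congr(($hx).coeff m))
  exact ⟨single m b, by rw [hb, single_mul_single, one_mul]⟩

instance charP {K M : Type*} [Field K] [Monoid M] (p : ℕ) [CharP K p] :
    CharP (MonoidAlgebra K M) p :=
  charP_of_injective_algebraMap' K p

lemma pow_prime_pow {p : ℕ} [Fact p.Prime] {G : Type*} [CommGroup G] (k : ℕ)
    (x : MonoidAlgebra (ZMod p) G) :
    x ^ p ^ k = mapDomainRingHom (ZMod p) (powMonoidHom (p ^ k)) x := by
  have : iterateFrobenius (MonoidAlgebra (ZMod p) G) p k =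
      mapDomainRingHom (ZMod p) (powMonoidHom (p ^ k)) :=
    ringHom_ext (by simp [iterateFrobenius_def, ZMod.pow_card_pow])
      (by simp [iterateFrobenius_def])
  exact congr($this x)

lemma exists_pow_eq_of_pow_eq_single {p : ℕ} [Fact p.Prime] {R G : Type*} [CommRing R]
    [CommGroup G] (f : R →+* ZMod p) {x : MonoidAlgebra R G} {k : ℕ} {g : G}
    (hx : x ^ p ^ k = single g 1) : ∃ h : G, h ^ p ^ k = g := by
  classical
  have hred : mapDomainRingHom (ZMod p) (powMonoidHom (p ^ k)) (mapRingHom G f x) =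
      single g 1 := by
    rw [← pow_prime_pow, ← map_pow, hx, mapRingHom_single, map_one]
  have hg : g ∈
      (mapDomainRingHom (ZMod p) (powMonoidHom (p ^ k)) (mapRingHom G f x)).coeff.support := by
    simp [hred]
  obtain ⟨h, -, hh⟩ := Finset.mem_image.mp (Finsupp.mapDomain_support hg)
  exact ⟨h, hh⟩

end MonoidAlgebra

section GroupRing

variable {R S G : Type*} [CommRing R] [CommRing S] [CommGroup G]

@[simp]
lemma aug_single (g : G) (r : R) : aug R G (single g r) = r := by
  simp [aug]

lemma aug_mapRingHom (f : R →+* S) (x : MonoidAlgebra R G) :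
    aug S G (mapRingHom G f x) = f (aug R G x) := by
  have : (aug S G).toRingHom.comp (mapRingHom G f) = f.comp (aug R G).toRingHom :=
    ringHom_ext (by simp) (by simp)
  exact congr($this x)

lemma mapDomainRingHom_one_apply (x : MonoidAlgebra R G) :
    mapDomainRingHom R (1 : G →* G) x = algebraMap R _ (aug R G x) := by
  have : mapDomainRingHom R (1 : G →* G) = (algebraMap R _).comp (aug R G).toRingHom :=
    ringHom_ext (by simp) (by simp)
  exact congr($this x)

lemma mem_Vgrp_iff (u : (MonoidAlgebra R G)ˣ) : u ∈ Vgrp R G ↔ aug R G u = 1 := by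
  simp [Vgrp, Units.ext_iff]

@[simp]
lemma val_iota (g : G) : (iota R G g : MonoidAlgebra R G) = single g 1 := rfl

lemma iota_mem_Vgrp (g : G) : iota R G g ∈ Vgrp R G := by
  simp [mem_Vgrp_iff]

lemma isPPure_range_codRestrict_iota {p : ℕ} [Fact p.Prime] (f : R →+* ZMod p) :
    ((iota R G).codRestrict (Vgrp R G) iota_mem_Vgrp).range.IsPPure p := by
  rintro k u ⟨g, hg⟩
  obtain ⟨h, hh⟩ := exists_pow_eq_of_pow_eq_single f
    (x := (u : (MonoidAlgebra R G)ˣ)) (k := k) (g := g)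
    (by rw [← Units.val_pow_eq_pow_val, ← Subgroup.coe_pow, ← hg]; rfl)
  exact ⟨_, ⟨h, rfl⟩, by rw [← map_pow, hh, hg]⟩

end GroupRing

theorem isPGroup_Vgrp {p e : ℕ} [Fact p.Prime] {G : Type*} [CommGroup G] [Finite G]
    (hG : IsPGroup p G) (he : 1 ≤ e) : IsPGroup p (Vgrp (ZMod (p ^ e)) G) := by
  obtain ⟨n, hn⟩ := IsPGroup.iff_card.mp hG
  have hdvd : p ∣ p ^ e := dvd_pow_self p (by omega)
  intro u
  set x : MonoidAlgebra (ZMod (p ^ e)) G := (u : (MonoidAlgebra (ZMod (p ^ e)) G)ˣ).val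
  have hred : mapRingHom G (ZMod.castHom hdvd (ZMod p)) (x ^ p ^ n - 1) = 0 := by
    rw [map_sub, map_pow, pow_prime_pow, ← hn, powMonoidHom_natCard_eq_one,
      mapDomainRingHom_one_apply, aug_mapRingHom, (mem_Vgrp_iff _).mp u.2, map_one, map_one,
      map_one, sub_self]
  have hp : ((p : ℕ) : MonoidAlgebra (ZMod (p ^ e)) G) ∣ x ^ p ^ n - 1 ^ p ^ n := by
    simpa [natCast_def] using
      dvd_of_mapRingHom_eq_zero (fun _ => ZMod.dvd_of_castHom_eq_zero hdvd) hred
  have hpe := dvd_sub_pow_of_dvd_sub hp (e - 1)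
  rw [Nat.sub_add_cancel he, ← Nat.cast_pow, natCast_def, ZMod.natCast_self, single_zero,
    zero_dvd_iff, sub_eq_zero, one_pow, ← pow_mul, ← pow_add] at hpe
  exact ⟨n + (e - 1), Subtype.ext (Units.ext (by simpa using hpe))⟩

/-- `G` is a direct factor of `V(Z_{p^e}G)`: there is a subgroup `L ≤ V` with
`ι(G) ∩ L = 1` and `V = ι(G) · L`. -/
theorem stmt_10 (p e : ℕ) (hp : p.Prime) (he : 1 ≤ e)
    (G : Type*) [CommGroup G] [Fintype G] (hG : IsPGroup p G) :
    ∃ L : Subgroup (MonoidAlgebra (ZMod (p ^ e)) G)ˣ,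
      L ≤ Vgrp (ZMod (p ^ e)) G ∧
      (iota (ZMod (p ^ e)) G).range ⊓ L = ⊥ ∧
      (∀ u ∈ Vgrp (ZMod (p ^ e)) G, ∃ g : G, ∃ l ∈ L, u = iota (ZMod (p ^ e)) G g * l) := by
  have : Fact p.Prime := ⟨hp⟩
  have : NeZero (p ^ e) := ⟨pow_ne_zero _ hp.ne_zero⟩
  set V := Vgrp (ZMod (p ^ e)) G
  have hdvd : p ∣ p ^ e := dvd_pow_self p (by omega)
  have hpure := isPPure_range_codRestrict_iota (G := G) (ZMod.castHom hdvd (ZMod p))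
  obtain ⟨L, hdisj, hdec⟩ := hpure.exists_complement (isPGroup_Vgrp hG he)
  refine ⟨L.map V.subtype, Subgroup.map_subtype_le L, ?_, fun u hu => ?_⟩
  · change (V.subtype.comp ((iota _ G).codRestrict V iota_mem_Vgrp)).range ⊓ _ = ⊥
    rw [MonoidHom.range_comp, ← Subgroup.map_inf_eq _ _ _ V.subtype_injective, hdisj,
      Subgroup.map_bot]
  · obtain ⟨_, ⟨g, rfl⟩, l, hl, hul⟩ := hdec ⟨u, hu⟩
    exact ⟨g, l, ⟨l, hl, rfl⟩, congr_arg Subtype.val hul⟩
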